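/- arXiv:2412.05900 — 3 statements merged into one kernel-verified Lean document; each statement's English description precedes it below -/
import Mathlib

section
/- The sparse erosion distance d̂_E is an extended pseudometric: for any ℝ^d-persistence modules M, N, O and interval families 𝓘, 𝓙, 𝓚, it is nonnegative, symmetric, vanishes on identical pairs, and satisfies d̂_E((dgm_M, 𝓘), (dgm_O, 𝓚)) ≤ d̂_E((dgm_M, 𝓘), (dgm_N, 𝓙)) + d̂_E((dgm_N, 𝓙), (dgm_O, 𝓚)). -/
/-- The closed `ε`-ball around `p` in `ℝ^d` w.r.t. the supremum distance,
described as an order interval. -/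
def supBall {d : ℕ} (p : Fin d → ℝ) (ε : ℝ) : Set (Fin d → ℝ) :=
  {q | (fun i => p i - ε) ≤ q ∧ q ≤ fun i => p i + ε}

/-- The `ε`-thickening `I^ε = ⋃_{p ∈ I} B_ε^□(p)` of a subset of `ℝ^d`. -/
def thick {d : ℕ} (I : Set (Fin d → ℝ)) (ε : ℝ) : Set (Fin d → ℝ) :=
  ⋃ p ∈ I, supBall p ε

/-- An interval of the poset `ℝ^d`: nonempty, order-convex, and connected via
chains of pairwise-comparable consecutive points. -/
def IsPosetInterval {d : ℕ} (I : Set (Fin d → ℝ)) : Prop :=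
  I.Nonempty ∧
  (∀ p ∈ I, ∀ q ∈ I, ∀ r, p ≤ r → r ≤ q → r ∈ I) ∧
  (∀ p ∈ I, ∀ q ∈ I, ∃ (n : ℕ) (c : Fin (n + 1) → Fin d → ℝ),
    c 0 = p ∧ c (Fin.last n) = q ∧ (∀ i, c i ∈ I) ∧
    ∀ i : Fin n, c i.castSucc ≤ c i.succ ∨ c i.succ ≤ c i.castSucc)

/-- A correspondence between families `A` and `B`: a left- and right-total
relation `R ⊆ A × B`. -/
def IsCorr {α : Type*} (A B : Set (Set α)) (R : Set (Set α × Set α)) : Prop :=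
  R ⊆ A ×ˢ B ∧ (∀ I ∈ A, ∃ J ∈ B, (I, J) ∈ R) ∧ (∀ J ∈ B, ∃ I ∈ A, (I, J) ∈ R)

/-- An `ε`-correspondence between families of intervals of `ℝ^d`. -/
def IsEpsCorr {d : ℕ} (A B : Set (Set (Fin d → ℝ))) (ε : ℝ)
    (R : Set (Set (Fin d → ℝ) × Set (Fin d → ℝ))) : Prop :=
  IsCorr A B R ∧ ∀ p ∈ R, p.2 ⊆ thick p.1 ε ∧ p.1 ⊆ thick p.2 ε

open scoped ENNReal

/-- `d̂(𝓘,𝓙) := inf {ε > 0 : ∃ an ε-correspondence between 𝓘 and 𝓙}`,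
with `inf ∅ = ∞`. -/
noncomputable def dhat {d : ℕ} (A B : Set (Set (Fin d → ℝ))) : ℝ≥0∞ :=
  sInf (ENNReal.ofReal '' {ε : ℝ | 0 < ε ∧ ∃ R, IsEpsCorr A B ε R})

/-- The sparse erosion distance between `(dgm_M, 𝓘)` and `(dgm_N, 𝓙)`, with the
generalized rank invariants abstracted as functions `rkM, rkN` on subsets of `ℝ^d`. -/
noncomputable def dEhat {d : ℕ} (rkM rkN : Set (Fin d → ℝ) → ℕ)
    (A B : Set (Set (Fin d → ℝ))) : ℝ≥0∞ :=
  sInf (ENNReal.ofReal '' {ε : ℝ | 0 < ε ∧ ∃ R, IsEpsCorr A B ε R ∧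
    ∀ p ∈ R, ∀ δ : ℝ, 0 ≤ δ →
      rkN (thick p.2 (ε + δ)) ≤ rkM (thick p.1 δ) ∧
      rkM (thick p.1 (ε + δ)) ≤ rkN (thick p.2 δ)})

/-!
Each property of `d̂_E` comes from an operation on correspondences: the inverse of an
`ε`-correspondence witnesses symmetry, the diagonal of `𝓘` is an `ε`-correspondence for every
`ε > 0` (here the monotonicity of `rk_M` enters), and composing an `ε₁`- with an
`ε₂`-correspondence gives an `(ε₁ + ε₂)`-correspondence. For the latter, thickenings add up,
`(I^ε₁)^ε₂ ⊆ I^(ε₁+ε₂)`, and the rank conditions chain: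
`rk_O(K^(ε₁+ε₂+δ)) ≤ rk_N(J^(ε₁+δ)) ≤ rk_M(I^δ)`.
-/

open SetRel

lemma ENNReal.sInf_ofReal_image_eq_zero {S : Set ℝ} (h : ∀ ε > 0, ε ∈ S) :
    sInf (ENNReal.ofReal '' S) = 0 := by
  refine le_antisymm (ENNReal.le_of_forall_pos_le_add fun ε hε _ => ?_) zero_le
  simpa using sInf_le (Set.mem_image_of_mem ENNReal.ofReal (h ε hε))

section Thickening

variable {d : ℕ} {p q x : Fin d → ℝ} {I J : Set (Fin d → ℝ)} {ε ε' ε₁ ε₂ : ℝ}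

lemma mem_supBall : q ∈ supBall p ε ↔ ∀ i, |q i - p i| ≤ ε := by
  simp only [supBall, Set.mem_ofPred_eq, Pi.le_def, abs_sub_le_iff, ← forall_and]
  exact forall_congr' fun i => by constructor <;> rintro ⟨h₁, h₂⟩ <;> constructor <;> linarith

lemma mem_supBall_add (hq : q ∈ supBall p ε₁) (hx : x ∈ supBall q ε₂) :
    x ∈ supBall p (ε₁ + ε₂) := by
  rw [mem_supBall] at *
  intro i
  calc |x i - p i| ≤ |x i - q i| + |q i - p i| := abs_sub_le _ _ _
    _ ≤ ε₁ + ε₂ := by linarith [hq i, hx i]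

lemma mem_thick : x ∈ thick I ε ↔ ∃ p ∈ I, x ∈ supBall p ε := by
  simp [thick]

lemma subset_thick (hε : 0 ≤ ε) : I ⊆ thick I ε :=
  fun p hp => mem_thick.2 ⟨p, hp, mem_supBall.2 fun i => by simpa using hε⟩

@[gcongr]
lemma thick_mono (hIJ : I ⊆ J) (hε : ε ≤ ε') : thick I ε ⊆ thick J ε' := by
  intro x hx
  obtain ⟨p, hp, hx⟩ := mem_thick.1 hx
  exact mem_thick.2 ⟨p, hIJ hp, mem_supBall.2 fun i => (mem_supBall.1 hx i).trans hε⟩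

lemma thick_thick_subset : thick (thick I ε₁) ε₂ ⊆ thick I (ε₁ + ε₂) := by
  intro x hx
  obtain ⟨q, hq, hx⟩ := mem_thick.1 hx
  obtain ⟨p, hp, hq⟩ := mem_thick.1 hq
  exact mem_thick.2 ⟨p, hp, mem_supBall_add hq hx⟩

end Thickening

namespace IsCorr

variable {α : Type*} {A B C : Set (Set α)} {R S : SetRel (Set α) (Set α)}

lemma inv (hR : IsCorr A B R) : IsCorr B A R.inv :=
  ⟨fun _ h => (hR.1 h).symm, hR.2.2, hR.2.1⟩

lemma diag (A : Set (Set α)) : IsCorr A A ((fun I => (I, I)) '' A) := by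
  refine ⟨?_, fun I hI => ⟨I, hI, I, hI, rfl⟩, fun I hI => ⟨I, hI, I, hI, rfl⟩⟩
  rintro _ ⟨I, hI, rfl⟩
  exact ⟨hI, hI⟩

lemma comp (hR : IsCorr A B R) (hS : IsCorr B C S) : IsCorr A C (R ○ S) := by
  refine ⟨?_, fun I hI => ?_, fun K hK => ?_⟩
  · rintro ⟨I, K⟩ ⟨J, hIJ, hJK⟩
    exact ⟨(hR.1 hIJ).1, (hS.1 hJK).2⟩
  · obtain ⟨J, hJ, hIJ⟩ := hR.2.1 I hI
    obtain ⟨K, hK, hJK⟩ := hS.2.1 J hJ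
    exact ⟨K, hK, J, hIJ, hJK⟩
  · obtain ⟨J, hJ, hJK⟩ := hS.2.2 K hK
    obtain ⟨I, hI, hIJ⟩ := hR.2.2 J hJ
    exact ⟨I, hI, J, hIJ, hJK⟩

end IsCorr

namespace IsEpsCorr

variable {d : ℕ} {A B C : Set (Set (Fin d → ℝ))} {R S : SetRel (Set (Fin d → ℝ)) (Set (Fin d → ℝ))}
  {ε ε₁ ε₂ : ℝ}

lemma inv (hR : IsEpsCorr A B ε R) : IsEpsCorr B A ε R.inv :=
  ⟨hR.1.inv, fun _ h => (hR.2 _ h).symm⟩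

lemma diag (A : Set (Set (Fin d → ℝ))) (hε : 0 ≤ ε) :
    IsEpsCorr A A ε ((fun I => (I, I)) '' A) := by
  refine ⟨IsCorr.diag A, ?_⟩
  rintro _ ⟨I, -, rfl⟩
  exact ⟨subset_thick hε, subset_thick hε⟩

lemma comp (hR : IsEpsCorr A B ε₁ R) (hS : IsEpsCorr B C ε₂ S) :
    IsEpsCorr A C (ε₁ + ε₂) (R ○ S) := by
  refine ⟨hR.1.comp hS.1, ?_⟩
  rintro ⟨I, K⟩ ⟨J, hIJ, hJK⟩
  obtain ⟨hJI, hIJ⟩ := hR.2 _ hIJ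
  obtain ⟨hKJ, hJK⟩ := hS.2 _ hJK
  constructor
  · calc K ⊆ thick J ε₂ := hKJ
      _ ⊆ thick (thick I ε₁) ε₂ := thick_mono hJI le_rfl
      _ ⊆ thick I (ε₁ + ε₂) := thick_thick_subset
  · calc I ⊆ thick J ε₁ := hIJ
      _ ⊆ thick (thick K ε₂) ε₁ := thick_mono hJK le_rfl
      _ ⊆ thick K (ε₁ + ε₂) := add_comm ε₂ ε₁ ▸ thick_thick_subset

end IsEpsCorr

section Erosion

variable {d : ℕ} {rkM rkN rkO : Set (Fin d → ℝ) → ℕ}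

def RankErodes (rkM rkN : Set (Fin d → ℝ) → ℕ) (ε : ℝ) (I J : Set (Fin d → ℝ)) : Prop :=
  ∀ δ : ℝ, 0 ≤ δ → rkN (thick J (ε + δ)) ≤ rkM (thick I δ)

lemma RankErodes.refl (hM : ∀ I J : Set (Fin d → ℝ), I ⊆ J → rkM J ≤ rkM I) {ε : ℝ}
    (hε : 0 ≤ ε) (I : Set (Fin d → ℝ)) : RankErodes rkM rkM ε I I :=
  fun δ _ => hM _ _ (thick_mono subset_rfl (by linarith))

lemma RankErodes.trans {ε₁ ε₂ : ℝ} {I J K : Set (Fin d → ℝ)} (hε₁ : 0 ≤ ε₁)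
    (hIJ : RankErodes rkM rkN ε₁ I J) (hJK : RankErodes rkN rkO ε₂ J K) :
    RankErodes rkM rkO (ε₁ + ε₂) I K := fun δ hδ =>
  calc rkO (thick K (ε₁ + ε₂ + δ)) = rkO (thick K (ε₂ + (ε₁ + δ))) := by ring_nf
    _ ≤ rkN (thick J (ε₁ + δ)) := hJK _ (by linarith)
    _ ≤ rkM (thick I δ) := hIJ δ hδ

def IsErosionCorr (rkM rkN : Set (Fin d → ℝ) → ℕ) (A B : Set (Set (Fin d → ℝ))) (ε : ℝ)
    (R : SetRel (Set (Fin d → ℝ)) (Set (Fin d → ℝ))) : Prop :=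
  IsEpsCorr A B ε R ∧ ∀ p ∈ R, RankErodes rkM rkN ε p.1 p.2 ∧ RankErodes rkN rkM ε p.2 p.1

def erosionRadii (rkM rkN : Set (Fin d → ℝ) → ℕ) (A B : Set (Set (Fin d → ℝ))) : Set ℝ :=
  {ε | 0 < ε ∧ ∃ R, IsErosionCorr rkM rkN A B ε R}

lemma dEhat_eq_sInf_erosionRadii (A B : Set (Set (Fin d → ℝ))) :
    dEhat rkM rkN A B = sInf (ENNReal.ofReal '' erosionRadii rkM rkN A B) := by
  simp only [dEhat, erosionRadii, IsErosionCorr, RankErodes, ← forall_and]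

variable {A B C : Set (Set (Fin d → ℝ))} {ε ε₁ ε₂ : ℝ}

lemma mem_erosionRadii_swap (h : ε ∈ erosionRadii rkM rkN A B) :
    ε ∈ erosionRadii rkN rkM B A := by
  obtain ⟨hε, R, hR, hrk⟩ := h
  exact ⟨hε, R.inv, hR.inv, fun _ hp => (hrk _ hp).symm⟩

lemma erosionRadii_comm : erosionRadii rkM rkN A B = erosionRadii rkN rkM B A :=
  Set.Subset.antisymm (fun _ => mem_erosionRadii_swap) (fun _ => mem_erosionRadii_swap)

lemma mem_erosionRadii_self (hM : ∀ I J : Set (Fin d → ℝ), I ⊆ J → rkM J ≤ rkM I)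
    (A : Set (Set (Fin d → ℝ))) (hε : 0 < ε) : ε ∈ erosionRadii rkM rkM A A := by
  refine ⟨hε, _, IsEpsCorr.diag A hε.le, ?_⟩
  rintro _ ⟨I, -, rfl⟩
  exact ⟨RankErodes.refl hM hε.le I, RankErodes.refl hM hε.le I⟩

lemma add_mem_erosionRadii (h₁ : ε₁ ∈ erosionRadii rkM rkN A B)
    (h₂ : ε₂ ∈ erosionRadii rkN rkO B C) : ε₁ + ε₂ ∈ erosionRadii rkM rkO A C := by
  obtain ⟨hε₁, R, hR, hrkR⟩ := h₁
  obtain ⟨hε₂, S, hS, hrkS⟩ := h₂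
  refine ⟨add_pos hε₁ hε₂, R ○ S, hR.comp hS, ?_⟩
  rintro ⟨I, K⟩ ⟨J, hIJ, hJK⟩
  exact ⟨(hrkR _ hIJ).1.trans hε₁.le (hrkS _ hJK).1,
    add_comm ε₂ ε₁ ▸ (hrkS _ hJK).2.trans hε₂.le (hrkR _ hIJ).2⟩

end Erosion

theorem dEhat_pseudometric_general {d : ℕ} (rkM rkN rkO : Set (Fin d → ℝ) → ℕ)
    (hM : ∀ I J : Set (Fin d → ℝ), I ⊆ J → rkM J ≤ rkM I)
    (𝓘 𝓙 𝓚 : Set (Set (Fin d → ℝ))) :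
    0 ≤ dEhat rkM rkN 𝓘 𝓙 ∧
    dEhat rkM rkN 𝓘 𝓙 = dEhat rkN rkM 𝓙 𝓘 ∧
    dEhat rkM rkM 𝓘 𝓘 = 0 ∧
    dEhat rkM rkO 𝓘 𝓚 ≤ dEhat rkM rkN 𝓘 𝓙 + dEhat rkN rkO 𝓙 𝓚 := by
  simp only [dEhat_eq_sInf_erosionRadii]
  refine ⟨zero_le, ?_, ?_, ?_⟩
  · rw [erosionRadii_comm]
  · exact ENNReal.sInf_ofReal_image_eq_zero fun ε hε => mem_erosionRadii_self hM 𝓘 hε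
  · simp only [sInf_image]
    refine ENNReal.le_iInf₂_add_iInf₂ fun ε₁ h₁ ε₂ h₂ => ?_
    rw [← ENNReal.ofReal_add h₁.1.le h₂.1.le]
    exact iInf₂_le _ (add_mem_erosionRadii h₁ h₂)

/-- The sparse erosion distance `d̂_E` is an extended pseudometric: it is
nonnegative, symmetric, vanishes on identical pairs, and satisfies the triangle
inequality. The generalized rank invariants of `M`, `N`, `O` are abstracted as
functions on subsets of `ℝ^d` that are inclusion-reversing. -/
theorem dEhat_pseudometric {d : ℕ} (rkM rkN rkO : Set (Fin d → ℝ) → ℕ)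
    (hM : ∀ I J : Set (Fin d → ℝ), I ⊆ J → rkM J ≤ rkM I)
    (hN : ∀ I J : Set (Fin d → ℝ), I ⊆ J → rkN J ≤ rkN I)
    (hO : ∀ I J : Set (Fin d → ℝ), I ⊆ J → rkO J ≤ rkO I)
    (𝓘 𝓙 𝓚 : Set (Set (Fin d → ℝ)))
    (h𝓘 : ∀ I ∈ 𝓘, IsPosetInterval I) (h𝓙 : ∀ J ∈ 𝓙, IsPosetInterval J)
    (h𝓚 : ∀ K ∈ 𝓚, IsPosetInterval K)
    (hne𝓘 : 𝓘.Nonempty) (hne𝓙 : 𝓙.Nonempty) (hne𝓚 : 𝓚.Nonempty) :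
    0 ≤ dEhat rkM rkN 𝓘 𝓙 ∧
    dEhat rkM rkN 𝓘 𝓙 = dEhat rkN rkM 𝓙 𝓘 ∧
    dEhat rkM rkM 𝓘 𝓘 = 0 ∧
    dEhat rkM rkO 𝓘 𝓚 ≤ dEhat rkM rkN 𝓘 𝓙 + dEhat rkN rkO 𝓙 𝓚 :=
  dEhat_pseudometric_general rkM rkN rkO hM 𝓘 𝓙 𝓚
end

section
/- Let I and J be (2,1)-intervals of ℝ² parametrized by vectors v_I = (x₁, y₁, a, b, c, d) and v_J = (x₂, y₂, e, f, g, h) in ℝ⁶ (with a,b,c,d,e,f,g,h ≥ 0), so that I has minimal points (x₁−b, y₁), (x₁, y₁−c) and maximal point (x₁+d, y₁+a), and analogously for J. If ‖v_I − v_J‖_∞ ≤ ε, then inf{δ ≥ 0 : J ⊆ I^δ and I ⊆ J^δ} ≤ 2ε. -/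
/-!
Each of the two branches of a `(2,1)`-interval is an order box `[m, M]` of `ℝ²`, and
perturbing the parameters by at most `ε` moves every corner by at most `2ε` in each
coordinate (e.g. `|(x₁ - b) - (x₂ - f)| ≤ |x₁ - x₂| + |b - f|`). A point of a box is then
within `2ε` of its coordinatewise clamp into the perturbed box, which is nonempty because
the lengths are nonnegative.
-/

/-- The closed `ε`-ball in `ℝ²` around `p` w.r.t. the supremum distance, as an
order interval. -/
def supBall2 (p : ℝ × ℝ) (ε : ℝ) : Set (ℝ × ℝ) :=
  {q | p.1 - ε ≤ q.1 ∧ p.2 - ε ≤ q.2 ∧ q.1 ≤ p.1 + ε ∧ q.2 ≤ p.2 + ε}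

/-- The `ε`-thickening of a subset of `ℝ²`. -/
def thick2 (I : Set (ℝ × ℝ)) (ε : ℝ) : Set (ℝ × ℝ) :=
  ⋃ p ∈ I, supBall2 p ε

/-- An interval of the poset `ℝ²`: nonempty, order-convex, connected via chains
of pairwise-comparable consecutive points. -/
def IsInterval2 (I : Set (ℝ × ℝ)) : Prop :=
  I.Nonempty ∧
  (∀ p ∈ I, ∀ q ∈ I, ∀ r, p ≤ r → r ≤ q → r ∈ I) ∧
  (∀ p ∈ I, ∀ q ∈ I, ∃ (n : ℕ) (c : Fin (n + 1) → ℝ × ℝ),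
    c 0 = p ∧ c (Fin.last n) = q ∧ (∀ i, c i ∈ I) ∧
    ∀ i : Fin n, c i.castSucc ≤ c i.succ ∨ c i.succ ≤ c i.castSucc)

/-- The `(2,1)`-interval of `ℝ²` with minimal points `(x-b, y)`, `(x, y-c)` and
maximal point `(x+d, y+a)`; a `(1,1)`-interval corresponds to `b = c = 0`. -/
def int21 (x y a b c d : ℝ) : Set (ℝ × ℝ) :=
  {p | (((x - b, y) : ℝ × ℝ) ≤ p ∨ ((x, y - c) : ℝ × ℝ) ≤ p) ∧ p ≤ (x + d, y + a)}

/-- The `(2,1)`-interval encoded by the parameter vector `v = (x,y,a,b,c,d) ∈ ℝ⁶`. -/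
def int21v (v : Fin 6 → ℝ) : Set (ℝ × ℝ) :=
  int21 (v 0) (v 1) (v 2) (v 3) (v 4) (v 5)

/-- Nonnegativity of the lengths `a, b, c, d` in the parameter vector. -/
def NonnegParams (v : Fin 6 → ℝ) : Prop :=
  0 ≤ v 2 ∧ 0 ≤ v 3 ∧ 0 ≤ v 4 ∧ 0 ≤ v 5

open Set

lemma abs_max_min_sub_le {m M m' M' p δ : ℝ} (hδ : 0 ≤ δ) (hmM : m ≤ M)
    (hm : m ≤ m' + δ) (hM : M' ≤ M + δ) (hp : p ∈ Icc m' M') :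
    |max m (min p M) - p| ≤ δ := by
  obtain ⟨hm'p, hpM'⟩ := hp
  rw [abs_le]
  constructor <;> grind

lemma Icc_subset_thick2 {m M m' M' : ℝ × ℝ} {δ : ℝ} (hδ : 0 ≤ δ) (hmM : m ≤ M)
    (hm : m ≤ m' + (δ, δ)) (hM : M' ≤ M + (δ, δ)) :
    Icc m' M' ⊆ thick2 (Icc m M) δ := by
  rintro p ⟨hm'p, hpM'⟩
  have h₁ := abs_le.1 (abs_max_min_sub_le hδ hmM.1 hm.1 hM.1 ⟨hm'p.1, hpM'.1⟩)
  have h₂ := abs_le.1 (abs_max_min_sub_le hδ hmM.2 hm.2 hM.2 ⟨hm'p.2, hpM'.2⟩)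
  simp only [thick2, mem_iUnion]
  refine ⟨(max m.1 (min p.1 M.1), max m.2 (min p.2 M.2)), ⟨?_, ?_⟩, ?_⟩
  · exact ⟨le_max_left _ _, le_max_left _ _⟩
  · exact ⟨max_le hmM.1 (min_le_right _ _), max_le hmM.2 (min_le_right _ _)⟩
  · refine ⟨?_, ?_, ?_, ?_⟩ <;> dsimp only <;> linarith

lemma thick2_mono {I I' : Set (ℝ × ℝ)} (h : I ⊆ I') (δ : ℝ) : thick2 I δ ⊆ thick2 I' δ :=
  biUnion_subset_biUnion_left h

lemma int21_eq_union (x y a b c d : ℝ) :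
    int21 x y a b c d = Icc (x - b, y) (x + d, y + a) ∪ Icc (x, y - c) (x + d, y + a) := by
  ext p
  simp only [int21, mem_ofPred_eq, mem_union, mem_Icc]
  tauto

lemma int21v_subset_thick2 {v w : Fin 6 → ℝ} {ε : ℝ} (hv : NonnegParams v) (hvw : ‖v - w‖ ≤ ε) :
    int21v w ⊆ thick2 (int21v v) (2 * ε) := by
  have hcoord : ∀ i, |v i - w i| ≤ ε := fun i => (norm_le_pi_norm (v - w) i).trans hvw
  have h0 := abs_le.1 (hcoord 0)
  have h1 := abs_le.1 (hcoord 1)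
  have h2 := abs_le.1 (hcoord 2)
  have h3 := abs_le.1 (hcoord 3)
  have h4 := abs_le.1 (hcoord 4)
  have h5 := abs_le.1 (hcoord 5)
  obtain ⟨ha, hb, hc, hd⟩ := hv
  have hε : 0 ≤ 2 * ε := by linarith [(norm_nonneg _).trans hvw]
  simp only [int21v, int21_eq_union]
  refine union_subset ?_ ?_
  · refine (Icc_subset_thick2 hε ?_ ?_ ?_).trans (thick2_mono subset_union_left _) <;>
      simp only [Prod.mk_le_mk, Prod.mk_add_mk] <;> constructor <;> linarith
  · refine (Icc_subset_thick2 hε ?_ ?_ ?_).trans (thick2_mono subset_union_right _) <;>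
      simp only [Prod.mk_le_mk, Prod.mk_add_mk] <;> constructor <;> linarith

/-- If the `ℝ⁶` parameter vectors of two `(2,1)`-intervals `I`, `J` of `ℝ²` are
at sup-distance at most `ε`, then the minimal common containment threshold
`inf{δ ≥ 0 : J ⊆ I^δ ∧ I ⊆ J^δ}` is at most `2ε`. -/
theorem threshold_le_two_eps (x₁ y₁ a b c d x₂ y₂ e f g h ε : ℝ)
    (ha : 0 ≤ a) (hb : 0 ≤ b) (hc : 0 ≤ c) (hd : 0 ≤ d)
    (he : 0 ≤ e) (hf : 0 ≤ f) (hg : 0 ≤ g) (hh : 0 ≤ h)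
    (hv : ‖(![x₁, y₁, a, b, c, d] - ![x₂, y₂, e, f, g, h] : Fin 6 → ℝ)‖ ≤ ε) :
    sInf {δ : ℝ | 0 ≤ δ ∧ int21 x₂ y₂ e f g h ⊆ thick2 (int21 x₁ y₁ a b c d) δ ∧
        int21 x₁ y₁ a b c d ⊆ thick2 (int21 x₂ y₂ e f g h) δ} ≤ 2 * ε := by
  have hε : 0 ≤ 2 * ε := by linarith [(norm_nonneg _).trans hv]
  refine csInf_le ⟨0, fun _ hδ => hδ.1⟩ ⟨hε, ?_, ?_⟩
  · exact int21v_subset_thick2 (v := ![x₁, y₁, a, b, c, d]) ⟨ha, hb, hc, hd⟩ hv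
  · exact int21v_subset_thick2 (v := ![x₂, y₂, e, f, g, h]) ⟨he, hf, hg, hh⟩
      ((norm_sub_rev _ _).trans_le hv)
end

section
/- There is no constant c > 0 such that for all finite families K, J₁, J₂ of (2,1)-intervals of ℝ² with |J₁| = |J₂|, the inequality |d̂(K, J₁) − d̂(K, J₂)| ≥ c · min_π ‖v_{π(J₁)} − v_{J₂}‖_∞ holds; i.e., the correspondence distance can vanish (or be arbitrarily small) while the parametrized vectorization distance remains bounded below. -/
/-- A correspondence: a left- and right-total relation `R ⊆ A × B`. -/
def IsCorr2 (A B : Set (Set (ℝ × ℝ))) (R : Set (Set (ℝ × ℝ) × Set (ℝ × ℝ))) : Prop :=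
  R ⊆ A ×ˢ B ∧ (∀ I ∈ A, ∃ J ∈ B, (I, J) ∈ R) ∧ (∀ J ∈ B, ∃ I ∈ A, (I, J) ∈ R)

/-- An `ε`-correspondence between families of intervals of `ℝ²`. -/
def IsEpsCorr2 (A B : Set (Set (ℝ × ℝ))) (ε : ℝ)
    (R : Set (Set (ℝ × ℝ) × Set (ℝ × ℝ))) : Prop :=
  IsCorr2 A B R ∧ ∀ p ∈ R, p.2 ⊆ thick2 p.1 ε ∧ p.1 ⊆ thick2 p.2 ε

open scoped ENNReal

/-- `d̂(𝓘,𝓙) := inf {ε > 0 : ∃ an ε-correspondence between 𝓘 and 𝓙}`, with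
`inf ∅ = ∞`. -/
noncomputable def dhat2 (A B : Set (Set (ℝ × ℝ))) : ℝ≥0∞ :=
  sInf (ENNReal.ofReal '' {ε : ℝ | 0 < ε ∧ ∃ R, IsEpsCorr2 A B ε R})

/-!
The parametrization of `(2,1)`-intervals by vectors of `ℝ⁶` is not injective: the horizontal
segment `[-1, 0] × {0}` is the interval with `x = 0, b = 1` and also the one with `x = -1, d = 1`.
Taking `J₁` and `J₂` to be one copy of this segment under each parametrization, the two families
are the same set of intervals, so `d̂(K, J₁) = d̂(K, J₂)` for every `K`, while the parameter
vectors are at sup-distance `1`.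
-/

theorem int21_eq_Icc_of_b_c_zero (x y a d : ℝ) :
    int21 x y a 0 0 d = Set.Icc (x, y) (x + d, y + a) := by
  ext p
  simp [int21]

theorem int21_eq_Icc_of_c_d_zero {b : ℝ} (x y a : ℝ) (hb : 0 ≤ b) :
    int21 x y a b 0 0 = Set.Icc (x - b, y) (x, y + a) := by
  ext p
  simp only [int21, Set.mem_ofPred_eq, Set.mem_Icc, sub_zero, add_zero]
  constructor
  · rintro ⟨hlow | hlow, hup⟩
    · exact ⟨hlow, hup⟩
    · exact ⟨le_trans (by simpa [Prod.le_def] using hb) hlow, hup⟩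
  · exact fun ⟨hlow, hup⟩ => ⟨Or.inl hlow, hup⟩

theorem int21v_segment_reparam :
    int21v ![0, 0, 0, 1, 0, 0] = int21v ![-1, 0, 0, 0, 0, 1] := by
  change int21 0 0 0 1 0 0 = int21 (-1) 0 0 0 0 1
  rw [int21_eq_Icc_of_c_d_zero _ _ _ zero_le_one, int21_eq_Icc_of_b_c_zero]
  norm_num

/-- There is no constant `c > 0` such that for all finite families `K` of
`(2,1)`-intervals and all equal-size parametrized families `J₁`, `J₂` of
`(2,1)`-intervals, `|d̂(K,J₁) − d̂(K,J₂)| ≥ c · min_π ‖v_{π(J₁)} − v_{J₂}‖_∞`: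
the correspondence distance can vanish while the vectorization distance stays
bounded below. -/
theorem no_reverse_lipschitz :
    ¬ ∃ c : ℝ, 0 < c ∧
      ∀ (n : ℕ) (K : Finset (Set (ℝ × ℝ))), K.Nonempty →
        (∀ I ∈ K, ∃ v : Fin 6 → ℝ, NonnegParams v ∧ I = int21v v) →
        ∀ w₁ w₂ : Fin (n + 1) → Fin 6 → ℝ,
          (∀ i, NonnegParams (w₁ i)) → (∀ i, NonnegParams (w₂ i)) →
          c * Finset.univ.inf' Finset.univ_nonempty
              (fun π : Equiv.Perm (Fin (n + 1)) =>
                Finset.univ.sup' Finset.univ_nonempty fun i => ‖w₁ (π i) - w₂ i‖) ≤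
            |(dhat2 ↑K (Set.range fun i => int21v (w₁ i))).toReal -
              (dhat2 ↑K (Set.range fun i => int21v (w₂ i))).toReal| := by
  rintro ⟨c, hc, H⟩
  set v₁ : Fin 6 → ℝ := ![0, 0, 0, 1, 0, 0]
  set v₂ : Fin 6 → ℝ := ![-1, 0, 0, 0, 0, 1]
  have hv₁ : NonnegParams v₁ := ⟨le_rfl, zero_le_one, le_rfl, le_rfl⟩
  have hv₂ : NonnegParams v₂ := ⟨le_rfl, le_rfl, le_rfl, zero_le_one⟩
  have hdist : 0 < ‖v₁ - v₂‖ :=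
    norm_pos_iff.mpr (sub_ne_zero.mpr fun h => by simpa [v₁, v₂] using congrFun h 0)
  have key := H 0 {int21v v₂} (Finset.singleton_nonempty _)
    (fun I hI => ⟨v₂, hv₂, Finset.mem_singleton.mp hI⟩)
    (fun _ => v₁) (fun _ => v₂) (fun _ => hv₁) (fun _ => hv₂)
  rw [int21v_segment_reparam, sub_self, abs_zero] at key
  simp only [Finset.sup'_const, Finset.inf'_const] at key
  exact (mul_pos hc hdist).not_ge key
end
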